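/- Assume all entries of R and C are nonnegative. For each pair of row strategies (p,q), let 𝒞_{pq} be the rounded column profile obtained from an optimal solution of the linear-programming relaxation (as in the rounding procedure), and let w_{pq} = T_{r^p}(𝒞_{pq}) + T_{𝒞_{pq}}(r^q). Then for any two row strategies r^i and r^j, the minimum cost of an alternating path from r^i to r^j all of whose intermediate column profiles are drawn from the set {𝒞_{pq} : p, q ∈ Fin m} is at most the minimum cost over ALL alternating paths from r^i to r^j plus m·(2‖R‖_{1,1} + ‖C‖_{1,1}). -/

import Mathlib

open Finset

/-- Reward needed to incentivize the row player to play `i'` when the columns play `𝒞`. -/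
noncomputable def Trow {m n k : ℕ} [NeZero m] (R : Fin m → Fin n → ℝ)
    (𝒞 : Fin k → Fin n) (i' : Fin m) : ℝ :=
  (univ.sup' univ_nonempty fun i => ∑ j, R i (𝒞 j)) - ∑ j, R i' (𝒞 j)

/-- Reward needed to incentivize the column players to play `𝒞'` when the row plays `i`. -/
noncomputable def Tcol {m n k : ℕ} [NeZero n] (C : Fin m → Fin n → ℝ)
    (i : Fin m) (𝒞' : Fin k → Fin n) : ℝ :=
  k * (univ.sup' univ_nonempty fun q => C i q) - ∑ j, C i (𝒞' j)

/-- A vertex of an alternating path: a row strategy or a column profile. -/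
abbrev AltVert (m n k : ℕ) := Fin m ⊕ (Fin k → Fin n)

/-- Weight of a step of an alternating path. -/
noncomputable def altWeight {m n k : ℕ} [NeZero m] [NeZero n] (R C : Fin m → Fin n → ℝ) :
    AltVert m n k → AltVert m n k → ℝ
  | Sum.inl r, Sum.inr c => Tcol C r c
  | Sum.inr c, Sum.inl r => Trow R c r
  | _, _ => 0

/-- `v 0, v 1, …, v L` is an alternating path. -/
def IsAlt {m n k : ℕ} (v : ℕ → AltVert m n k) (L : ℕ) : Prop :=
  ∀ t < L, (v t).isLeft ≠ (v (t+1)).isLeft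

/-- Cost of the alternating path `v 0, v 1, …, v L`. -/
noncomputable def altCost {m n k : ℕ} [NeZero m] [NeZero n] (R C : Fin m → Fin n → ℝ)
    (v : ℕ → AltVert m n k) (L : ℕ) : ℝ :=
  ∑ t ∈ Finset.range L, altWeight R C (v t) (v (t+1))

/-- Feasibility for the linear program `LP_z`. -/
def LPfeasible {m n : ℕ} (R : Fin m → Fin n → ℝ) (k : ℕ) (z : Fin m) (x : Fin n → ℝ) : Prop :=
  (∀ q, 0 ≤ x q) ∧ (∑ q, x q = (k : ℝ)) ∧
  (∀ z' : Fin m, ∑ q, x q * R z' q ≤ ∑ q, x q * R z q)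

/-- Objective of the linear program `LP_z(p,q)`. -/
noncomputable def LPobj {m n : ℕ} [NeZero n] (R C : Fin m → Fin n → ℝ) (k : ℕ)
    (p q z : Fin m) (x : Fin n → ℝ) : ℝ :=
  (k * (univ.sup' univ_nonempty fun q' => C p q') - ∑ q', x q' * C p q')
    + ∑ q', x q' * R z q' - ∑ q', x q' * R q q'

/-- The set of objective values attained by feasible solutions of the programs `LP_z(p,q)`. -/
noncomputable def wstarSet {m n : ℕ} [NeZero n] (R C : Fin m → Fin n → ℝ) (k : ℕ)
    (p q : Fin m) : Set ℝ :=
  {y | ∃ (z : Fin m) (x : Fin n → ℝ), LPfeasible R k z x ∧ y = LPobj R C k p q z x}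

/-!
Write `V p q` for the optimal value of `LP_z(p,q)`. A detour `r^p → 𝒞 → r^q` costs at least
`V p q`, because the vector counting the players of `𝒞` on each column is feasible for the program
of a best response to `𝒞`. Conversely, the rounded profile `𝒞_{pq}` costs at most
`V p q + 2‖R‖₁₁ + ‖C‖₁₁`: rounding down moves every column other than `u` by less than one, and
the surplus put on `u` is cheapest there because `u` minimises the column maxima of `R`.
An arbitrary path, cut into detours, therefore costs at least the `V`-weight of its walk of row
strategies. As `V ≥ 0`, cutting the cycles out of this walk leaves fewer than `m` detours, and
replacing each by the corresponding `𝒞_{pq}` adds at most `2‖R‖₁₁ + ‖C‖₁₁` per detour.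
-/

section Rounding

variable {ι : Type*} [Fintype ι] [DecidableEq ι]

/-- `d = x - X` for an integer rounding `X` of `x` with the same total that rounds every
coordinate other than `u` down, so that the whole surplus lands on `u`. -/
def IsRoundingError (u : ι) (d : ι → ℝ) : Prop :=
  ∑ i, d i = 0 ∧ ∀ i ≠ u, 0 ≤ d i ∧ d i ≤ 1

namespace IsRoundingError

variable {u : ι} {d : ι → ℝ}

lemma neg_apply_eq_sum_erase (hd : IsRoundingError u d) : -d u = ∑ i ∈ univ.erase u, d i := by
  linarith [add_sum_erase univ d (mem_univ u), hd.1]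

lemma apply_nonpos (hd : IsRoundingError u d) : d u ≤ 0 := by
  have := hd.neg_apply_eq_sum_erase
  linarith [sum_nonneg (s := univ.erase u) fun i hi => (hd.2 i (ne_of_mem_erase hi)).1]

lemma sum_mul_le (hd : IsRoundingError u d) {g : ι → ℝ} (hg : ∀ i, 0 ≤ g i) :
    ∑ i, d i * g i ≤ ∑ i, g i :=
  sum_le_sum fun i _ => by
    by_cases hi : i = u
    · subst hi
      nlinarith [hd.apply_nonpos, hg i]
    · nlinarith [hd.2 i hi, hg i]

lemma neg_sum_mul_le (hd : IsRoundingError u d) {h M : ι → ℝ} (hh : ∀ i, 0 ≤ h i)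
    (hhM : ∀ i, h i ≤ M i) (hu : ∀ i, M u ≤ M i) :
    -∑ i, d i * h i ≤ ∑ i, M i := by
  have hrest : 0 ≤ ∑ i ∈ univ.erase u, d i * h i :=
    sum_nonneg fun i hi => mul_nonneg (hd.2 i (ne_of_mem_erase hi)).1 (hh i)
  rw [← add_sum_erase univ _ (mem_univ u)]
  calc -(d u * h u + ∑ i ∈ univ.erase u, d i * h i) ≤ -d u * M u := by
        nlinarith [hd.apply_nonpos, hhM u]
    _ = ∑ i ∈ univ.erase u, d i * M u := by rw [hd.neg_apply_eq_sum_erase, sum_mul]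
    _ ≤ ∑ i ∈ univ.erase u, M i := sum_le_sum fun i hi => by
        have := hd.2 i (ne_of_mem_erase hi)
        nlinarith [hu i, (hh u).trans (hhM u)]
    _ ≤ ∑ i, M i := sum_le_sum_of_subset_of_nonneg (erase_subset _ _)
        fun i _ _ => ((hh u).trans (hhM u)).trans (hu i)

end IsRoundingError

end Rounding

section FiniteSums

variable {α β : Type*} [Fintype α] [Fintype β] {A : α → β → ℝ}

lemma sum_le_sum_sum_of_nonneg (hA : ∀ a b, 0 ≤ A a b) (a : α) :
    ∑ b, A a b ≤ ∑ a, ∑ b, A a b :=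
  single_le_sum (fun a _ => sum_nonneg fun b _ => hA a b) (mem_univ a)

lemma sum_sup'_le_sum_sum_of_nonneg [Nonempty α] (hA : ∀ a b, 0 ≤ A a b) :
    ∑ b, univ.sup' univ_nonempty (fun a => A a b) ≤ ∑ a, ∑ b, A a b := by
  rw [sum_comm]
  exact sum_le_sum fun b _ => sup'_le _ _ fun a _ =>
    single_le_sum (f := fun a => A a b) (fun a _ => hA a b) (mem_univ a)

lemma sum_mul_le_mul_sup' [Nonempty β] {x : β → ℝ} (hx : ∀ b, 0 ≤ x b) (f : β → ℝ) :
    ∑ b, x b * f b ≤ (∑ b, x b) * univ.sup' univ_nonempty f := by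
  rw [sum_mul]
  exact sum_le_sum fun b _ => mul_le_mul_of_nonneg_left (le_sup' f (mem_univ b)) (hx b)

end FiniteSums

section Game

variable {m n k : ℕ}

noncomputable def colCount (𝒞 : Fin k → Fin n) (q : Fin n) : ℝ := #{j | 𝒞 j = q}

lemma sum_colCount_mul (𝒞 : Fin k → Fin n) (f : Fin n → ℝ) :
    ∑ q, colCount 𝒞 q * f q = ∑ j, f (𝒞 j) := by
  simp only [colCount, ← sum_fiberwise' univ 𝒞 f, sum_const, nsmul_eq_mul]

lemma sum_colCount (𝒞 : Fin k → Fin n) : ∑ q, colCount 𝒞 q = k := by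
  simpa using sum_colCount_mul 𝒞 1

lemma Trow_nonneg [NeZero m] (R : Fin m → Fin n → ℝ) (𝒞 : Fin k → Fin n) (i' : Fin m) :
    0 ≤ Trow R 𝒞 i' :=
  sub_nonneg.2 (le_sup' (fun i => ∑ j, R i (𝒞 j)) (mem_univ i'))

lemma Tcol_nonneg [NeZero n] (C : Fin m → Fin n → ℝ) (i : Fin m) (𝒞' : Fin k → Fin n) :
    0 ≤ Tcol C i 𝒞' := by
  have h := sum_mul_le_mul_sup' (x := colCount 𝒞') (fun _ => Nat.cast_nonneg _) (C i)
  rw [sum_colCount_mul, sum_colCount] at h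
  exact sub_nonneg.2 h

lemma altCost_nonneg [NeZero m] [NeZero n] (R C : Fin m → Fin n → ℝ)
    (v : ℕ → AltVert m n k) (L : ℕ) : 0 ≤ altCost R C v L := by
  refine sum_nonneg fun t _ => ?_
  rcases v t with r | c <;> rcases v (t + 1) with r' | c' <;>
    simp [altWeight, Trow_nonneg, Tcol_nonneg]

lemma LPobj_nonneg [NeZero n] (R C : Fin m → Fin n → ℝ) {z : Fin m} {x : Fin n → ℝ}
    (hx : LPfeasible R k z x) (p q : Fin m) : 0 ≤ LPobj R C k p q z x := by
  have hC := sum_mul_le_mul_sup' hx.1 (C p)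
  rw [hx.2.1] at hC
  rw [LPobj]
  linarith [hx.2.2 q]

lemma Tcol_add_Trow_mem_wstarSet [NeZero m] [NeZero n] (R C : Fin m → Fin n → ℝ)
    (p q : Fin m) (𝒞 : Fin k → Fin n) : Tcol C p 𝒞 + Trow R 𝒞 q ∈ wstarSet R C k p q := by
  obtain ⟨z, -, hz⟩ := exists_mem_eq_sup' univ_nonempty fun i => ∑ j, R i (𝒞 j)
  refine ⟨z, colCount 𝒞, ⟨fun q => Nat.cast_nonneg _, sum_colCount 𝒞, fun z' => ?_⟩, ?_⟩
  · simp only [sum_colCount_mul]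
    exact hz ▸ le_sup' (fun i => ∑ j, R i (𝒞 j)) (mem_univ z')
  · rw [LPobj, Tcol, Trow, hz]
    simp only [sum_colCount_mul]
    ring

lemma Tcol_add_Trow_le_LPobj_add [NeZero m] [NeZero n] {R C : Fin m → Fin n → ℝ}
    (hR : ∀ p q, 0 ≤ R p q) (hC : ∀ p q, 0 ≤ C p q) {z : Fin m} {x : Fin n → ℝ}
    (hx : LPfeasible R k z x) {u : Fin n}
    (hu : ∀ q, (univ.sup' univ_nonempty fun p => R p u) ≤ univ.sup' univ_nonempty fun p => R p q)
    {𝒞 : Fin k → Fin n} (hd : IsRoundingError u fun q => x q - colCount 𝒞 q) (p q : Fin m) :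
    Tcol C p 𝒞 + Trow R 𝒞 q ≤
      LPobj R C k p q z x + (2 * (∑ p, ∑ q, R p q) + ∑ p, ∑ q, C p q) := by
  have hCp := hd.sum_mul_le (hC p)
  have hRq := hd.sum_mul_le (hR q)
  have hsup : (univ.sup' univ_nonempty fun i => ∑ j, R i (𝒞 j)) ≤
      ∑ q', x q' * R z q' + ∑ q', univ.sup' univ_nonempty (fun p => R p q') :=
    sup'_le _ _ fun i _ => by
      have hRi := hd.neg_sum_mul_le (hR i) (fun q' => le_sup' (fun p => R p q') (mem_univ i)) hu
      simp only [sub_mul, sum_sub_distrib] at hRi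
      linarith [hx.2.2 i, sum_colCount_mul 𝒞 (R i)]
  simp only [sub_mul, sum_sub_distrib] at hCp hRq
  rw [Tcol, Trow, LPobj, ← sum_colCount_mul 𝒞 (C p), ← sum_colCount_mul 𝒞 (R q)]
  linarith [sum_le_sum_sum_of_nonneg hC p, sum_le_sum_sum_of_nonneg hR q,
    sum_sup'_le_sum_sum_of_nonneg hR]

lemma isRoundingError_of_floor {x : Fin n → ℝ} (hk : ∑ q, x q = k) {u : Fin n}
    {𝒞 : Fin k → Fin n} (hfloor : ∀ q ≠ u, (#{j | 𝒞 j = q} : ℤ) = ⌊x q⌋) :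
    IsRoundingError u fun q => x q - colCount 𝒞 q := by
  refine ⟨by rw [sum_sub_distrib, hk, sum_colCount, sub_self], fun q hq => ?_⟩
  have hcount : colCount 𝒞 q = ⌊x q⌋ := by rw [colCount]; exact_mod_cast hfloor q hq
  show 0 ≤ x q - colCount 𝒞 q ∧ x q - colCount 𝒞 q ≤ 1
  rw [hcount, ← Int.fract]
  exact ⟨Int.fract_nonneg _, (Int.fract_lt_one _).le⟩

end Game

section Walk

variable {α : Type*}

/-- Cutting the closed sub-walk between two visits `a < b` of the same vertex. -/
lemma exists_shorter_walk_sum_le (D : α → α → ℝ) (hD : ∀ a b, 0 ≤ D a b) (r : ℕ → α)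
    {a b s : ℕ} (hab : a < b) (hbs : b ≤ s) (hr : r a = r b) :
    ∃ r' : ℕ → α, r' 0 = r 0 ∧ r' (s - (b - a)) = r s ∧
      ∑ t ∈ range (s - (b - a)), D (r' t) (r' (t + 1)) ≤ ∑ t ∈ range s, D (r t) (r (t + 1)) := by
  set φ : ℕ → ℕ := fun t => if t < a then t else t + (b - a) with hφ
  have hstep : ∀ t, r (φ (t + 1)) = r (φ t + 1) := by
    intro t
    rcases lt_trichotomy (t + 1) a with h | h | h
    · simp [hφ, h, Nat.lt_of_succ_lt h]
    · simp only [hφ, h, lt_irrefl, if_false, show t < a by omega, if_true]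
      rw [show a + (b - a) = b by omega, ← hr]
    · simp only [hφ, show ¬ t + 1 < a by omega, show ¬ t < a by omega, if_false]
      congr 1
      omega
  refine ⟨r ∘ φ, ?_, ?_, ?_⟩
  · rcases Nat.eq_zero_or_pos a with h | h
    · simp [hφ, h, ← hr]
    · simp [hφ, h]
  · simp only [Function.comp, hφ, show ¬ s - (b - a) < a by omega, if_false]
    congr 1
    omega
  · have hinj : Set.InjOn φ (range (s - (b - a))) := fun t _ t' _ h => by
      simp only [hφ] at h
      split_ifs at h <;> omega
    have hsub : (range (s - (b - a))).image φ ⊆ range s := fun _ hy => by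
      obtain ⟨t, ht, rfl⟩ := mem_image.1 hy
      simp only [mem_range, hφ] at ht ⊢
      split_ifs <;> omega
    calc ∑ t ∈ range (s - (b - a)), D ((r ∘ φ) t) ((r ∘ φ) (t + 1))
        = ∑ t ∈ (range (s - (b - a))).image φ, D (r t) (r (t + 1)) := by
          rw [sum_image hinj]
          exact sum_congr rfl fun t _ => by simp only [Function.comp, hstep]
      _ ≤ ∑ t ∈ range s, D (r t) (r (t + 1)) :=
          sum_le_sum_of_subset_of_nonneg hsub fun _ _ _ => hD _ _

lemma exists_walk_length_lt_card_sum_le [Fintype α] (D : α → α → ℝ) (hD : ∀ a b, 0 ≤ D a b)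
    (r : ℕ → α) (s : ℕ) :
    ∃ (r' : ℕ → α) (s' : ℕ), s' < Fintype.card α ∧ r' 0 = r 0 ∧ r' s' = r s ∧
      ∑ t ∈ range s', D (r' t) (r' (t + 1)) ≤ ∑ t ∈ range s, D (r t) (r (t + 1)) := by
  induction s using Nat.strong_induction_on generalizing r with
  | _ s ih =>
  by_cases hs : s < Fintype.card α
  · exact ⟨r, s, hs, rfl, rfl, le_rfl⟩
  obtain ⟨a, b, hab, hrab⟩ := Fintype.exists_ne_map_eq_of_card_lt (fun t : Fin (s + 1) => r t)
    (by simp only [Fintype.card_fin]; omega)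
  wlog hlt : a < b generalizing a b
  · exact this b a hab.symm hrab.symm (lt_of_le_of_ne (not_lt.1 hlt) hab.symm)
  obtain ⟨r₁, hr₁0, hr₁s, hr₁⟩ := exists_shorter_walk_sum_le D hD r (Fin.lt_def.1 hlt)
    (Nat.lt_succ_iff.1 b.2) hrab
  obtain ⟨r', s', hs', hr'0, hr's', hr'⟩ := ih (s - (b - a)) (by omega) r₁
  exact ⟨r', s', hs', hr'0.trans hr₁0, hr's'.trans hr₁s, hr'.trans hr₁⟩

end Walk

section AlternatingPath

variable {m n k : ℕ}

def interleave (r : ℕ → Fin m) (c : ℕ → Fin k → Fin n) (t : ℕ) : AltVert m n k :=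
  if Even t then Sum.inl (r (t / 2)) else Sum.inr (c (t / 2))

variable {r : ℕ → Fin m} {c : ℕ → Fin k → Fin n}

@[simp] lemma interleave_zero : interleave r c 0 = Sum.inl (r 0) := by
  simp [interleave]

@[simp] lemma interleave_two_mul (t : ℕ) : interleave r c (2 * t) = Sum.inl (r t) := by
  simp [interleave]

@[simp] lemma interleave_two_mul_add_one (t : ℕ) :
    interleave r c (2 * t + 1) = Sum.inr (c t) := by
  simp [interleave, show (2 * t + 1) / 2 = t by omega]

lemma isAlt_interleave (L : ℕ) : IsAlt (interleave r c) L := fun t _ => by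
  obtain ⟨t, rfl | rfl⟩ := Nat.even_or_odd' t
  · simp
  · simp [show 2 * t + 1 + 1 = 2 * (t + 1) by ring]

lemma exists_eq_of_interleave_eq_inr {t : ℕ} {b : Fin k → Fin n}
    (h : interleave r c t = Sum.inr b) : ∃ t', b = c t' := by
  unfold interleave at h
  split_ifs at h
  exact ⟨t / 2, (Sum.inr_injective h).symm⟩

lemma sum_range_two_mul {M : Type*} [AddCommMonoid M] (f : ℕ → M) (s : ℕ) :
    ∑ t ∈ range (2 * s), f t = ∑ t ∈ range s, (f (2 * t) + f (2 * t + 1)) := by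
  induction s with
  | zero => simp
  | succ s ih =>
    rw [show 2 * (s + 1) = 2 * s + 1 + 1 by ring, sum_range_succ, sum_range_succ, ih,
      sum_range_succ, add_assoc]

lemma altCost_interleave [NeZero m] [NeZero n] (R C : Fin m → Fin n → ℝ) (s : ℕ) :
    altCost R C (interleave r c) (2 * s) =
      ∑ t ∈ range s, (Tcol C (r t) (c t) + Trow R (c t) (r (t + 1))) := by
  rw [altCost, sum_range_two_mul]
  refine sum_congr rfl fun t _ => ?_
  rw [show 2 * t + 1 + 1 = 2 * (t + 1) by ring]
  simp [altWeight]

lemma altCost_congr [NeZero m] [NeZero n] (R C : Fin m → Fin n → ℝ) {v w : ℕ → AltVert m n k}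
    {L : ℕ} (h : ∀ t ≤ L, v t = w t) : altCost R C v L = altCost R C w L :=
  sum_congr rfl fun t ht => by rw [h t (by simp at ht; omega), h (t + 1) (by simp at ht; omega)]

lemma IsAlt.isLeft_eq_decide_even {v : ℕ → AltVert m n k} {L : ℕ} (hv : IsAlt v L)
    (h0 : (v 0).isLeft) : ∀ t ≤ L, (v t).isLeft = decide (Even t) := by
  intro t
  induction t with
  | zero => simpa using h0
  | succ t ih =>
    intro ht
    have := hv t (by omega)
    rw [ih (by omega)] at this
    simp only [Nat.even_add_one, decide_not]
    revert this
    cases (v (t + 1)).isLeft <;> cases decide (Even t) <;> simp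

lemma IsAlt.exists_eq_interleave [NeZero n] {v : ℕ → AltVert m n k} {L : ℕ} (hv : IsAlt v L)
    {i j : Fin m} (h0 : v 0 = Sum.inl i) (hL : v L = Sum.inl j) :
    ∃ (s : ℕ) (r : ℕ → Fin m) (c : ℕ → Fin k → Fin n),
      L = 2 * s ∧ ∀ t ≤ L, v t = interleave r c t := by
  have hpar := hv.isLeft_eq_decide_even (by simp [h0])
  obtain ⟨s, hs⟩ : Even L := by simpa [hL] using hpar L le_rfl
  refine ⟨s, fun t => (v (2 * t)).elim id fun _ => i, fun t => (v (2 * t + 1)).elim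
    (fun _ _ => 0) id, by omega, fun t ht => ?_⟩
  have := hpar t ht
  obtain ⟨t, rfl | rfl⟩ := Nat.even_or_odd' t
  · cases h : v (2 * t) <;> simp_all
  · cases h : v (2 * t + 1) <;> simp_all

lemma IsAlt.exists_walk_sum_le_altCost [NeZero m] [NeZero n] {R C : Fin m → Fin n → ℝ}
    {v : ℕ → AltVert m n k} {L : ℕ} (hv : IsAlt v L) {i j : Fin m} (h0 : v 0 = Sum.inl i)
    (hL : v L = Sum.inl j) {V : Fin m → Fin m → ℝ}
    (hV : ∀ p q (𝒞 : Fin k → Fin n), V p q ≤ Tcol C p 𝒞 + Trow R 𝒞 q) :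
    ∃ (r : ℕ → Fin m) (s : ℕ), r 0 = i ∧ r s = j ∧
      ∑ t ∈ range s, V (r t) (r (t + 1)) ≤ altCost R C v L := by
  obtain ⟨s, r, c, rfl, hvrc⟩ := hv.exists_eq_interleave h0 hL
  refine ⟨r, s, ?_, ?_, ?_⟩
  · simpa [h0] using (hvrc 0 (Nat.zero_le _)).symm
  · simpa [hL] using (hvrc (2 * s) le_rfl).symm
  · rw [altCost_congr R C hvrc, altCost_interleave]
    exact sum_le_sum fun t _ => hV _ _ _

lemma sInf_restricted_altCost_le [NeZero m] [NeZero n] (R C : Fin m → Fin n → ℝ)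
    (𝒞pq : Fin m → Fin m → Fin k → Fin n) (r : ℕ → Fin m) (s : ℕ) :
    sInf {y | ∃ (L : ℕ) (v : ℕ → AltVert m n k),
        IsAlt v L ∧ v 0 = Sum.inl (r 0) ∧ v L = Sum.inl (r s) ∧
        (∀ t ≤ L, ∀ c : Fin k → Fin n, v t = Sum.inr c → ∃ p q, c = 𝒞pq p q) ∧
        y = altCost R C v L} ≤
      ∑ t ∈ range s, (Tcol C (r t) (𝒞pq (r t) (r (t + 1))) +
        Trow R (𝒞pq (r t) (r (t + 1))) (r (t + 1))) := by
  refine csInf_le ⟨0, fun _ ⟨L, v, _, _, _, _, hy⟩ => hy ▸ altCost_nonneg R C v L⟩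
    ⟨2 * s, interleave r fun t => 𝒞pq (r t) (r (t + 1)), isAlt_interleave _, interleave_zero,
      interleave_two_mul s, fun _ _ _ h => ?_, (altCost_interleave R C s).symm⟩
  obtain ⟨t, rfl⟩ := exists_eq_of_interleave_eq_inr h
  exact ⟨_, _, rfl⟩

end AlternatingPath

theorem restricted_alternating_path_cost_le_opt_add_error_general
    (m n k : ℕ) [NeZero m] [NeZero n]
    (R C : Fin m → Fin n → ℝ)
    (hR : ∀ p q, 0 ≤ R p q) (hC : ∀ p q, 0 ≤ C p q)
    (z : Fin m → Fin m → Fin m) (x : Fin m → Fin m → Fin n → ℝ)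
    (hfeas : ∀ p q : Fin m, LPfeasible R k (z p q) (x p q))
    (hopt : ∀ p q : Fin m,
      IsLeast (wstarSet R C k p q) (LPobj R C k p q (z p q) (x p q)))
    (u : Fin n)
    (hu : ∀ q : Fin n, (univ.sup' univ_nonempty fun p => R p u) ≤
      univ.sup' univ_nonempty fun p => R p q)
    (x' : Fin m → Fin m → Fin n → ℤ)
    (hx' : ∀ p q : Fin m, ∀ q' ≠ u, x' p q q' = ⌊x p q q'⌋)
    (𝒞pq : Fin m → Fin m → (Fin k → Fin n))
    (hcount : ∀ p q : Fin m, ∀ q' : Fin n,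
      ((univ.filter fun j => 𝒞pq p q j = q').card : ℤ) = x' p q q')
    (i j : Fin m) :
    sInf {y | ∃ (L : ℕ) (v : ℕ → AltVert m n k),
        IsAlt v L ∧ v 0 = Sum.inl i ∧ v L = Sum.inl j ∧
        (∀ t ≤ L, ∀ c : Fin k → Fin n, v t = Sum.inr c → ∃ p q, c = 𝒞pq p q) ∧
        y = altCost R C v L} ≤
      sInf {y | ∃ (L : ℕ) (v : ℕ → AltVert m n k),
        IsAlt v L ∧ v 0 = Sum.inl i ∧ v L = Sum.inl j ∧ y = altCost R C v L}
      + m * (2 * (∑ p, ∑ q, R p q) + ∑ p, ∑ q, C p q) := by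
  set E := 2 * (∑ p, ∑ q, R p q) + ∑ p, ∑ q, C p q
  set V : Fin m → Fin m → ℝ := fun p q => LPobj R C k p q (z p q) (x p q)
  have hE : 0 ≤ E := add_nonneg (mul_nonneg zero_le_two (sum_nonneg fun p _ => sum_nonneg
    fun q _ => hR p q)) (sum_nonneg fun p _ => sum_nonneg fun q _ => hC p q)
  have hrounded : ∀ p q, Tcol C p (𝒞pq p q) + Trow R (𝒞pq p q) q ≤ V p q + E := fun p q =>
    Tcol_add_Trow_le_LPobj_add hR hC (hfeas p q) hu (isRoundingError_of_floor (hfeas p q).2.1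
      fun q' hq' => (hcount p q q').trans (hx' p q q' hq')) p q
  refine sub_le_iff_le_add.1 (le_csInf ⟨_, 2, interleave (fun t => if t = 0 then i else j)
    (fun _ _ => u), isAlt_interleave 2, by simp, interleave_two_mul 1, rfl⟩ ?_)
  rintro _ ⟨L, v, hv, h0, hL, rfl⟩
  obtain ⟨r, s, rfl, rfl, hrv⟩ := hv.exists_walk_sum_le_altCost h0 hL fun p q 𝒞 =>
    (hopt p q).2 (Tcol_add_Trow_mem_wstarSet R C p q 𝒞)
  obtain ⟨r', s', hs', hr'0, hr's', hr'⟩ := exists_walk_length_lt_card_sum_le V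
    (fun p q => LPobj_nonneg R C (hfeas p q) p q) r s
  have hs'm : (s' : ℝ) * E ≤ m * E :=
    mul_le_mul_of_nonneg_right (by exact_mod_cast (Fintype.card_fin m ▸ hs').le) hE
  calc _ ≤ ∑ t ∈ range s', (V (r' t) (r' (t + 1)) + E) - m * E := by
        rw [← hr'0, ← hr's']
        exact sub_le_sub_right ((sInf_restricted_altCost_le R C 𝒞pq r' s').trans
          (sum_le_sum fun t _ => hrounded _ _)) _
    _ ≤ ∑ t ∈ range s', V (r' t) (r' (t + 1)) := by
        rw [sum_add_distrib, sum_const, card_range, nsmul_eq_mul]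
        linarith
    _ ≤ altCost R C v L := hr'.trans hrv

/-- Restricting the intermediate column profiles of an alternating path from row strategy `r^i`
to row strategy `r^j` to the rounded profiles `𝒞_{pq}` (obtained from optimal LP solutions)
increases the minimum cost by at most `m·(2‖R‖₁₁ + ‖C‖₁₁)`. -/
theorem restricted_alternating_path_cost_le_opt_add_error
    (m n k : ℕ) [NeZero m] [NeZero n]
    (R C : Fin m → Fin n → ℝ)
    (hR : ∀ p q, 0 ≤ R p q) (hC : ∀ p q, 0 ≤ C p q)
    (z : Fin m → Fin m → Fin m) (x : Fin m → Fin m → Fin n → ℝ)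
    (hfeas : ∀ p q : Fin m, LPfeasible R k (z p q) (x p q))
    (hopt : ∀ p q : Fin m,
      IsLeast (wstarSet R C k p q) (LPobj R C k p q (z p q) (x p q)))
    (u : Fin n)
    (hu : ∀ q : Fin n, (univ.sup' univ_nonempty fun p => R p u) ≤
      univ.sup' univ_nonempty fun p => R p q)
    (x' : Fin m → Fin m → Fin n → ℤ)
    (hx' : ∀ p q : Fin m, ∀ q' ≠ u, x' p q q' = ⌊x p q q'⌋)
    (hx'u : ∀ p q : Fin m, x' p q u = ⌊x p q u⌋ + ((k : ℤ) - ∑ q', ⌊x p q q'⌋))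
    (𝒞pq : Fin m → Fin m → (Fin k → Fin n))
    (hcount : ∀ p q : Fin m, ∀ q' : Fin n,
      ((univ.filter fun j => 𝒞pq p q j = q').card : ℤ) = x' p q q')
    (i j : Fin m) :
    sInf {y | ∃ (L : ℕ) (v : ℕ → AltVert m n k),
        IsAlt v L ∧ v 0 = Sum.inl i ∧ v L = Sum.inl j ∧
        (∀ t ≤ L, ∀ c : Fin k → Fin n, v t = Sum.inr c → ∃ p q, c = 𝒞pq p q) ∧
        y = altCost R C v L} ≤
      sInf {y | ∃ (L : ℕ) (v : ℕ → AltVert m n k),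
        IsAlt v L ∧ v 0 = Sum.inl i ∧ v L = Sum.inl j ∧ y = altCost R C v L}
      + m * (2 * (∑ p, ∑ q, R p q) + ∑ p, ∑ q, C p q) :=
  restricted_alternating_path_cost_le_opt_add_error_general m n k R C hR hC z x hfeas hopt u hu x'
    hx' 𝒞pq hcount i j
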